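/- arXiv:2209.01623 — 2 statements merged into one kernel-verified Lean document; each statement's English description precedes it below -/
import Mathlib

section
/- Let L, R, T be finite sets, f : L × R → T, and let P = {(A_1,B_1,k_1),…,(A_m,B_m,k_m)} be a cyclic partition of f with relabeling functions σ_{A,i}, σ_{B,i}, σ_{C,i}. Then for every n ≥ 1, every g : L^n → ℤ, every h : R^n → ℤ, and every v ∈ T^n, it holds that (g ⊛_f h)(v) = Σ_{p ∈ [m]^n} Σ_{q ∈ Z_p} [σ^T_p(q) = v] · (g_p ⊙ h_p)(q), where g_p, h_p are the projections of g and h with respect to the type p, and ⊙ denotes the cyclic convolution on Z_p. -/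
open Finset

/-- The `f`-convolution of `g : L^n → ℤ` and `h : R^n → ℤ`, evaluated at `v ∈ T^n`:
`(g ⊛_f h)(v) = Σ_{u, w : u ⊕_f w = v} g(u) · h(w)`. -/
def fConv {L R T : Type*} [Fintype L] [Fintype R] [DecidableEq T] {n : ℕ}
    (f : L × R → T) (g : (Fin n → L) → ℤ) (h : (Fin n → R) → ℤ)
    (v : Fin n → T) : ℤ :=
  ∑ u : Fin n → L, ∑ w : Fin n → R,
    if ∀ j, f (u j, w j) = v j then g u * h w else 0

/-- The projection `g_p` of `g : L^n → ℤ` with respect to the type `p ∈ [m]^n`. -/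
def projL {L : Type*} [Fintype L] [DecidableEq L] {m n : ℕ}
    (A : Fin m → Finset L) (k : Fin m → ℕ)
    (σA : (i : Fin m) → L → Fin (k i)) (g : (Fin n → L) → ℤ)
    (p : Fin n → Fin m) (q : (j : Fin n) → Fin (k (p j))) : ℤ :=
  ∑ u : Fin n → L,
    if (∀ j, u j ∈ A (p j)) ∧ (∀ j, σA (p j) (u j) = q j) then g u else 0

/-- The projection `h_p` of `h : R^n → ℤ` with respect to the type `p ∈ [m]^n`. -/
def projR {R : Type*} [Fintype R] [DecidableEq R] {m n : ℕ}
    (B : Fin m → Finset R) (k : Fin m → ℕ)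
    (σB : (i : Fin m) → R → Fin (k i)) (h : (Fin n → R) → ℤ)
    (p : Fin n → Fin m) (q : (j : Fin n) → Fin (k (p j))) : ℤ :=
  ∑ w : Fin n → R,
    if (∀ j, w j ∈ B (p j)) ∧ (∀ j, σB (p j) (w j) = q j) then h w else 0

/-- Cyclic convolution `a ⊙ b` on `Z_p = ℤ_{k_{p_1}} × … × ℤ_{k_{p_n}}`, where addition
`+_p` is coordinatewise addition modulo `k_{p_j}` (the addition of `Fin (k (p j))`). -/
def cycConv {m n : ℕ} (k : Fin m → ℕ) (p : Fin n → Fin m)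
    (a b : ((j : Fin n) → Fin (k (p j))) → ℤ)
    (q : (j : Fin n) → Fin (k (p j))) : ℤ :=
  ∑ r : (j : Fin n) → Fin (k (p j)), ∑ s : (j : Fin n) → Fin (k (p j)),
    if ∀ j, r j + s j = q j then a r * b s else 0

/-! Pairing the cyclic convolution `g_p ⊙ h_p` with any test function `F` on `Z_p` gives
`Σ g(u) h(w) F(σ^L_p(u) + σ^R_p(w))` over `u ∈ L_p`, `w ∈ R_p`. Taking for `F` the indicator
of `σ^T_p = v`, the minor identity `f = σ_C (σ_A + σ_B)` turns the type-`p` term into the part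
of `(g ⊛_f h)(v)` coming from pairs `(u, w)` of type `p`. Since the blocks `A_i × B_i`
partition `L × R`, every pair `(u, w)` has exactly one type, so summing over types recovers
`(g ⊛_f h)(v)`. -/

theorem sum_mul_cycConv {m n : ℕ} (k : Fin m → ℕ) (p : Fin n → Fin m)
    (a b F : ((j : Fin n) → Fin (k (p j))) → ℤ) :
    ∑ q, F q * cycConv k p a b q = ∑ r, ∑ s, a r * b s * F (r + s) := by
  simp only [cycConv, Finset.mul_sum, mul_ite, mul_zero]
  rw [Finset.sum_comm]
  refine Finset.sum_congr rfl fun r _ => ?_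
  rw [Finset.sum_comm]
  refine Finset.sum_congr rfl fun s _ => ?_
  simp only [← Pi.add_apply r s, ← funext_iff, mul_comm (F _)]
  exact Fintype.sum_ite_eq (r + s) _

section Projections

variable {L R : Type*} [Fintype L] [Fintype R] [DecidableEq L] [DecidableEq R] {m n : ℕ}
  (A : Fin m → Finset L) (B : Fin m → Finset R) (k : Fin m → ℕ)
  (σA : (i : Fin m) → L → Fin (k i)) (σB : (i : Fin m) → R → Fin (k i))
  (p : Fin n → Fin m)

theorem projR_eq_projL (h : (Fin n → R) → ℤ) : projR B k σB h p = projL B k σB h p := rfl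

theorem sum_projL_mul (g : (Fin n → L) → ℤ) (G : ((j : Fin n) → Fin (k (p j))) → ℤ) :
    ∑ r, projL A k σA g p r * G r =
      ∑ u : Fin n → L, if ∀ j, u j ∈ A (p j) then g u * G (fun j => σA (p j) (u j)) else 0 := by
  simp only [projL, Finset.sum_mul, ite_mul, zero_mul]
  rw [Finset.sum_comm]
  refine Finset.sum_congr rfl fun u _ => ?_
  simp only [ite_and, ← funext_iff]
  split_ifs
  · exact Fintype.sum_ite_eq _ _
  · exact Finset.sum_const_zero

theorem sum_mul_cycConv_projL_projR (g : (Fin n → L) → ℤ) (h : (Fin n → R) → ℤ)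
    (F : ((j : Fin n) → Fin (k (p j))) → ℤ) :
    ∑ q, F q * cycConv k p (projL A k σA g p) (projR B k σB h p) q =
      ∑ u : Fin n → L, ∑ w : Fin n → R,
        if (∀ j, u j ∈ A (p j)) ∧ (∀ j, w j ∈ B (p j)) then
          g u * h w * F (fun j => σA (p j) (u j) + σB (p j) (w j))
        else 0 := by
  rw [sum_mul_cycConv]
  simp only [mul_assoc, ← Finset.mul_sum, sum_projL_mul, projR_eq_projL]
  refine Finset.sum_congr rfl fun u _ => ?_
  split_ifs with hu
  · simp only [Finset.mul_sum, hu, implies_true, true_and, mul_ite, mul_zero, Pi.add_def]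
  · simp [hu]

end Projections

theorem existsUnique_type {L R : Type*} {m n : ℕ} {A : Fin m → Finset L} {B : Fin m → Finset R}
    (hpart : ∀ (a : L) (b : R), ∃! i : Fin m, a ∈ A i ∧ b ∈ B i)
    (u : Fin n → L) (w : Fin n → R) :
    ∃! p : Fin n → Fin m, (∀ j, u j ∈ A (p j)) ∧ (∀ j, w j ∈ B (p j)) := by
  choose t ht using fun j => (hpart (u j) (w j)).exists
  exact ⟨t, ⟨fun j => (ht j).1, fun j => (ht j).2⟩,
    fun p hp => funext fun j => (hpart (u j) (w j)).unique ⟨hp.1 j, hp.2 j⟩ (ht j)⟩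

theorem sum_types_ite {L R T : Type*} [DecidableEq L] [DecidableEq R] [DecidableEq T] {m n : ℕ}
    {A : Fin m → Finset L} {B : Fin m → Finset R} {k : Fin m → ℕ} {f : L × R → T}
    {σA : (i : Fin m) → L → Fin (k i)} {σB : (i : Fin m) → R → Fin (k i)}
    {σC : (i : Fin m) → Fin (k i) → T}
    (hminor : ∀ i, ∀ a ∈ A i, ∀ b ∈ B i, f (a, b) = σC i (σA i a + σB i b))
    (hpart : ∀ (a : L) (b : R), ∃! i : Fin m, a ∈ A i ∧ b ∈ B i)
    (u : Fin n → L) (w : Fin n → R) (v : Fin n → T) (c : ℤ) :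
    ∑ p : Fin n → Fin m,
      (if (∀ j, u j ∈ A (p j)) ∧ (∀ j, w j ∈ B (p j)) then
        c * if ∀ j, σC (p j) (σA (p j) (u j) + σB (p j) (w j)) = v j then 1 else 0
      else 0) =
      if ∀ j, f (u j, w j) = v j then c else 0 := by
  obtain ⟨p, hp, huniq⟩ := existsUnique_type hpart u w
  rw [Fintype.sum_eq_single p fun p' hp' => if_neg fun h => hp' (huniq p' h), if_pos hp,
    mul_ite, mul_one, mul_zero]
  refine if_congr (forall_congr' fun j => ?_) rfl rfl
  rw [hminor _ _ (hp.1 j) _ (hp.2 j)]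

theorem fConv_eq_sum_types_cycConv_general
    {L R T : Type*} [Fintype L] [Fintype R]
    [DecidableEq L] [DecidableEq R] [DecidableEq T]
    {m n : ℕ}
    (f : L × R → T)
    (A : Fin m → Finset L) (B : Fin m → Finset R) (k : Fin m → ℕ)
    (σA : (i : Fin m) → L → Fin (k i)) (σB : (i : Fin m) → R → Fin (k i))
    (σC : (i : Fin m) → Fin (k i) → T)
    (hminor : ∀ i, ∀ a ∈ A i, ∀ b ∈ B i, f (a, b) = σC i (σA i a + σB i b))
    (hpart : ∀ (a : L) (b : R), ∃! i : Fin m, a ∈ A i ∧ b ∈ B i)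
    (g : (Fin n → L) → ℤ) (h : (Fin n → R) → ℤ) (v : Fin n → T) :
    fConv f g h v =
      ∑ p : Fin n → Fin m, ∑ q : (j : Fin n) → Fin (k (p j)),
        (if ∀ j, σC (p j) (q j) = v j then 1 else 0) *
          cycConv k p (projL A k σA g p) (projR B k σB h p) q := by
  simp only [fConv, sum_mul_cycConv_projL_projR]
  conv_rhs => rw [Finset.sum_comm]
  refine Finset.sum_congr rfl fun u _ => ?_
  conv_rhs => rw [Finset.sum_comm]
  refine Finset.sum_congr rfl fun w _ => ?_
  exact (sum_types_ite hminor hpart u w v (g u * h w)).symm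

theorem fConv_eq_sum_types_cycConv
    {L R T : Type*} [Fintype L] [Fintype R] [Fintype T]
    [DecidableEq L] [DecidableEq R] [DecidableEq T]
    {m n : ℕ} (hm : 1 ≤ m) (hn : 1 ≤ n)
    (f : L × R → T)
    (A : Fin m → Finset L) (B : Fin m → Finset R) (k : Fin m → ℕ)
    (hk : ∀ i, 1 ≤ k i)
    (σA : (i : Fin m) → L → Fin (k i)) (σB : (i : Fin m) → R → Fin (k i))
    (σC : (i : Fin m) → Fin (k i) → T)
    (hminor : ∀ i, ∀ a ∈ A i, ∀ b ∈ B i, f (a, b) = σC i (σA i a + σB i b))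
    (hpart : ∀ (a : L) (b : R), ∃! i : Fin m, a ∈ A i ∧ b ∈ B i)
    (g : (Fin n → L) → ℤ) (h : (Fin n → R) → ℤ) (v : Fin n → T) :
    fConv f g h v =
      ∑ p : Fin n → Fin m, ∑ q : (j : Fin n) → Fin (k (p j)),
        (if ∀ j, σC (p j) (q j) = v j then 1 else 0) *
          cycConv k p (projL A k σA g p) (projR B k σB h p) q :=
  fConv_eq_sum_types_cycConv_general f A B k σA σB σC hminor hpart g h v
end

section
/- Let L, R, T be finite sets, f : L × R → T, and let {(A_i,B_i,k_i)}_{i∈[m]} be a cyclic partition of f with relabeling functions σ_{A,i}, σ_{B,i}, σ_{C,i}. Fix n ≥ 1, g : L^n → ℤ and h : R^n → ℤ. Suppose that for every type p ∈ [m]^n a function c_p : Z_p → ℤ satisfies c_p = g_p ⊙ h_p (the cyclic convolution of the projections of g and h with respect to p), and define r : T^n → ℤ by r(v) = Σ_{p ∈ [m]^n} Σ_{q ∈ Z_p with σ^T_p(q) = v} c_p(q). Then r = g ⊛_f h. -/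
open Finset

/-!
Unfolding the projections, `c_p(q)` is the sum of `g u * h w` over the pairs `(u, w) ∈ L_p × R_p`
with `σ^L_p(u) + σ^R_p(w) = q`. Hence `Σ_q [σ^T_p(q) = v] c_p(q)` sums `g u * h w` over the pairs
in `L_p × R_p` with `σ^T_p(σ^L_p(u) + σ^R_p(w)) = v`, which on `L_p × R_p` is the condition
`u ⊕_f w = v` because every `(A_i, B_i, k_i)` is a cyclic minor. Since the `A_i × B_i` partition
`L × R`, each pair `(u, w)` lies in `L_p × R_p` for exactly one type `p`, so summing over `p`
gives `g ⊛_f h`.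
-/

lemma sum_sum_ite_mul_sum_fiberwise {ι κ α β M : Type*} [Fintype α] [Fintype β]
    [DecidableEq α] [DecidableEq β] [CommSemiring M] (s : Finset ι) (t : Finset κ)
    (φ : ι → α) (ψ : κ → β) (P : α → β → Prop) [∀ a b, Decidable (P a b)]
    (g : ι → M) (h : κ → M) :
    ∑ a : α, ∑ b : β,
        (if P a b then (∑ i ∈ s with φ i = a, g i) * ∑ j ∈ t with ψ j = b, h j else 0) =
      ∑ i ∈ s, ∑ j ∈ t, if P (φ i) (ψ j) then g i * h j else 0 := by
  calc _ = ∑ a, ∑ b, ∑ i ∈ s with φ i = a, ∑ j ∈ t with ψ j = b,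
        if P (φ i) (ψ j) then g i * h j else 0 := by
        refine sum_congr rfl fun a _ => sum_congr rfl fun b _ => ?_
        split_ifs with hP
        · rw [sum_mul_sum]
          refine sum_congr rfl fun i hi => sum_congr rfl fun j hj => ?_
          rw [(mem_filter.1 hi).2, (mem_filter.1 hj).2, if_pos hP]
        · refine (sum_eq_zero fun i hi => sum_eq_zero fun j hj => ?_).symm
          rw [(mem_filter.1 hi).2, (mem_filter.1 hj).2, if_neg hP]
    _ = ∑ a, ∑ i ∈ s with φ i = a, ∑ b, ∑ j ∈ t with ψ j = b,
        if P (φ i) (ψ j) then g i * h j else 0 := by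
        simp_rw [sum_comm (s := (univ : Finset β))]
    _ = _ := by simp_rw [sum_fiberwise]

section Types

variable {L R : Type*} {m n : ℕ} {A : Fin m → Finset L} {B : Fin m → Finset R}

lemma existsUnique_type_of_partition
    (hpart : ∀ (a : L) (b : R), ∃! i : Fin m, a ∈ A i ∧ b ∈ B i)
    (u : Fin n → L) (w : Fin n → R) :
    ∃! p : Fin n → Fin m, ∀ j, u j ∈ A (p j) ∧ w j ∈ B (p j) := by
  choose i hi hi_unique using hpart
  exact ⟨fun j => i (u j) (w j), fun j => hi _ _,
    fun p hp => funext fun j => hi_unique _ _ _ (hp j)⟩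

lemma sum_types_sum_piFinset [Fintype L] [Fintype R] [DecidableEq L] [DecidableEq R]
    {M : Type*} [AddCommMonoid M]
    (hpart : ∀ (a : L) (b : R), ∃! i : Fin m, a ∈ A i ∧ b ∈ B i)
    (F : (Fin n → L) → (Fin n → R) → M) :
    ∑ p : Fin n → Fin m, ∑ u ∈ Fintype.piFinset (fun j => A (p j)),
        ∑ w ∈ Fintype.piFinset (fun j => B (p j)), F u w = ∑ u, ∑ w, F u w := by
  calc _ = ∑ p : Fin n → Fin m, ∑ u, ∑ w,
        if ∀ j, u j ∈ A (p j) ∧ w j ∈ B (p j) then F u w else 0 := by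
        refine sum_congr rfl fun p _ => ?_
        rw [← sum_ite_mem_eq]
        refine sum_congr rfl fun u _ => ?_
        rw [← sum_ite_mem_eq, ite_sum_zero]
        refine sum_congr rfl fun w _ => ?_
        simp only [← ite_and, Fintype.mem_piFinset, forall_and]
    _ = ∑ u, ∑ w, ∑ p : Fin n → Fin m,
        if ∀ j, u j ∈ A (p j) ∧ w j ∈ B (p j) then F u w else 0 := by
        simp_rw [sum_comm (s := (univ : Finset (Fin n → Fin m)))]
    _ = _ := by
        refine sum_congr rfl fun u _ => sum_congr rfl fun w _ => ?_
        obtain ⟨p, hp, hp_unique⟩ := existsUnique_type_of_partition hpart u w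
        rw [Fintype.sum_eq_single p fun p' hp' => if_neg (mt (hp_unique p') hp'), if_pos hp]

end Types

lemma sum_ite_sum_sum_ite_eq {ι κ α M : Type*} [Fintype α] [DecidableEq α] [AddCommMonoid M]
    (s : Finset ι) (t : Finset κ) (x : ι → κ → α) (P : α → Prop) [DecidablePred P]
    (G : ι → κ → M) :
    ∑ a : α, (if P a then ∑ i ∈ s, ∑ j ∈ t, if x i j = a then G i j else 0 else 0) =
      ∑ i ∈ s, ∑ j ∈ t, if P (x i j) then G i j else 0 := by
  rw [← sum_filter, sum_comm]
  refine sum_congr rfl fun i _ => ?_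
  rw [sum_comm]
  refine sum_congr rfl fun j _ => ?_
  simp only [sum_ite_eq, mem_filter, mem_univ, true_and]

section Projections

variable {L R : Type*} [Fintype L] [Fintype R] [DecidableEq L] [DecidableEq R] {m n : ℕ}
  (A : Fin m → Finset L) (B : Fin m → Finset R) (k : Fin m → ℕ)
  (σA : (i : Fin m) → L → Fin (k i)) (σB : (i : Fin m) → R → Fin (k i))
  (g : (Fin n → L) → ℤ) (h : (Fin n → R) → ℤ) (p : Fin n → Fin m)

lemma projL_eq_sum_filter (q : (j : Fin n) → Fin (k (p j))) :
    projL A k σA g p q =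
      ∑ u ∈ Fintype.piFinset (fun j => A (p j)) with (fun j => σA (p j) (u j)) = q, g u := by
  rw [sum_filter, ← sum_ite_mem_eq, projL]
  simp only [Fintype.mem_piFinset, ← ite_and, funext_iff]

lemma projR_eq_sum_filter (q : (j : Fin n) → Fin (k (p j))) :
    projR B k σB h p q =
      ∑ w ∈ Fintype.piFinset (fun j => B (p j)) with (fun j => σB (p j) (w j)) = q, h w :=
  projL_eq_sum_filter B k σB h p q

lemma cycConv_projL_projR (q : (j : Fin n) → Fin (k (p j))) :
    cycConv k p (projL A k σA g p) (projR B k σB h p) q =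
      ∑ u ∈ Fintype.piFinset (fun j => A (p j)), ∑ w ∈ Fintype.piFinset (fun j => B (p j)),
        if (fun j => σA (p j) (u j) + σB (p j) (w j)) = q then g u * h w else 0 := by
  simp only [cycConv, projL_eq_sum_filter, projR_eq_sum_filter]
  rw [sum_sum_ite_mul_sum_fiberwise]
  simp only [funext_iff]

end Projections

theorem algorithm_correct_general
    {L R T : Type*} [Fintype L] [Fintype R]
    [DecidableEq L] [DecidableEq R] [DecidableEq T]
    {m n : ℕ}
    (f : L × R → T)
    (A : Fin m → Finset L) (B : Fin m → Finset R) (k : Fin m → ℕ)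
    (σA : (i : Fin m) → L → Fin (k i)) (σB : (i : Fin m) → R → Fin (k i))
    (σC : (i : Fin m) → Fin (k i) → T)
    (hminor : ∀ i, ∀ a ∈ A i, ∀ b ∈ B i, f (a, b) = σC i (σA i a + σB i b))
    (hpart : ∀ (a : L) (b : R), ∃! i : Fin m, a ∈ A i ∧ b ∈ B i)
    (g : (Fin n → L) → ℤ) (h : (Fin n → R) → ℤ)
    (c : (p : Fin n → Fin m) → ((j : Fin n) → Fin (k (p j))) → ℤ)
    (hc : ∀ p q, c p q = cycConv k p (projL A k σA g p) (projR B k σB h p) q)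
    (r : (Fin n → T) → ℤ)
    (hr : ∀ v, r v = ∑ p : Fin n → Fin m, ∑ q : (j : Fin n) → Fin (k (p j)),
        if ∀ j, σC (p j) (q j) = v j then c p q else 0) :
    r = fConv f g h := by
  funext v
  calc r v = ∑ p : Fin n → Fin m, ∑ u ∈ Fintype.piFinset (fun j => A (p j)),
        ∑ w ∈ Fintype.piFinset (fun j => B (p j)),
          if ∀ j, σC (p j) (σA (p j) (u j) + σB (p j) (w j)) = v j then g u * h w else 0 := by
        simp only [hr, hc, cycConv_projL_projR, sum_ite_sum_sum_ite_eq]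
    _ = ∑ p : Fin n → Fin m, ∑ u ∈ Fintype.piFinset (fun j => A (p j)),
        ∑ w ∈ Fintype.piFinset (fun j => B (p j)),
          if ∀ j, f (u j, w j) = v j then g u * h w else 0 := by
        refine sum_congr rfl fun p _ => sum_congr rfl fun u hu => sum_congr rfl fun w hw => ?_
        rw [Fintype.mem_piFinset] at hu hw
        simp only [← hminor _ _ (hu _) _ (hw _)]
    _ = fConv f g h v := sum_types_sum_piFinset hpart _

/-- Correctness of the cyclic partition algorithm: if `c_p = g_p ⊙ h_p` for every type
`p`, and `r(v) = Σ_{p} Σ_{q ∈ Z_p, σ^T_p(q) = v} c_p(q)`, then `r = g ⊛_f h`. -/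
theorem algorithm_correct
    {L R T : Type*} [Fintype L] [Fintype R] [Fintype T]
    [DecidableEq L] [DecidableEq R] [DecidableEq T]
    {m n : ℕ} (hm : 1 ≤ m) (hn : 1 ≤ n)
    (f : L × R → T)
    (A : Fin m → Finset L) (B : Fin m → Finset R) (k : Fin m → ℕ)
    (hk : ∀ i, 1 ≤ k i)
    (σA : (i : Fin m) → L → Fin (k i)) (σB : (i : Fin m) → R → Fin (k i))
    (σC : (i : Fin m) → Fin (k i) → T)
    (hminor : ∀ i, ∀ a ∈ A i, ∀ b ∈ B i, f (a, b) = σC i (σA i a + σB i b))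
    (hpart : ∀ (a : L) (b : R), ∃! i : Fin m, a ∈ A i ∧ b ∈ B i)
    (g : (Fin n → L) → ℤ) (h : (Fin n → R) → ℤ)
    (c : (p : Fin n → Fin m) → ((j : Fin n) → Fin (k (p j))) → ℤ)
    (hc : ∀ p q, c p q = cycConv k p (projL A k σA g p) (projR B k σB h p) q)
    (r : (Fin n → T) → ℤ)
    (hr : ∀ v, r v = ∑ p : Fin n → Fin m, ∑ q : (j : Fin n) → Fin (k (p j)),
        if ∀ j, σC (p j) (q j) = v j then c p q else 0) :
    r = fConv f g h :=
  algorithm_correct_general f A B k σA σB σC hminor hpart g h c hc r hr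
end
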